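/- arXiv:1401.6659 — 4 statements merged into one kernel-verified Lean document; each statement's English description precedes it below -/
import Mathlib

section
/- Let S be a set of positive integers with positive Banach density δ(S) > 0, and let N = ⌊1/δ(S)⌋ + 1. Then there exist a positive integer k and a subset Q ⊆ S such that: (1) k ≤ N − 1; (2) the Banach density of Q satisfies δ(Q) ≥ (N·δ(S) − 1)/(2N²(N − 1)) > 0; and (3) for all a ∈ Q, we have a + k ∈ S. -/
/-- The Banach (upper) density of a set of natural numbers: the `limsup`, as the interval
length `n` tends to infinity, of the largest proportion `|S ∩ I| / |I|` over
intervals `I` of natural numbers of length `n`. -/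
noncomputable def banachDensity (S : Set ℕ) : ℝ :=
  Filter.limsup (fun n : ℕ => ⨆ a : ℕ, ((S ∩ Set.Ico a (a + n)).ncard : ℝ) / n) Filter.atTop

/-!
In a window `I` of length `n`, call `x ∈ S ∩ I` short if `x + k ∈ S ∩ I` for some `1 ≤ k < N`.
Points that are not short are `N`-separated, so there are at most `n / N + 1` of them, and by
pigeonhole one `k` witnesses at least a `1 / (N - 1)` fraction of the short points. Hence in the
windows where `S` has density close to `δ(S) > 1 / N`, some `Q_k = {x ∈ S | x + k ∈ S}` has
density at least about `(δ(S) - 1 / N) / (N - 1)`; only finitely many `k` occur, so one of them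
does so for infinitely many window lengths.
-/

open Filter Set

noncomputable def maxWindowDensity (S : Set ℕ) (n : ℕ) : ℝ :=
  ⨆ a : ℕ, ((S ∩ Ico a (a + n)).ncard : ℝ) / n

section Window

variable (S : Set ℕ) (n : ℕ)

lemma ncard_inter_Ico_le (a : ℕ) : (S ∩ Ico a (a + n)).ncard ≤ n :=
  calc (S ∩ Ico a (a + n)).ncard ≤ (Ico a (a + n)).ncard :=
        ncard_le_ncard inter_subset_right (finite_Ico _ _)
    _ = n := by simp

lemma window_density_le_one (a : ℕ) : ((S ∩ Ico a (a + n)).ncard : ℝ) / n ≤ 1 :=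
  div_le_one_of_le₀ (by exact_mod_cast ncard_inter_Ico_le S n a) n.cast_nonneg

lemma le_maxWindowDensity (a : ℕ) :
    ((S ∩ Ico a (a + n)).ncard : ℝ) / n ≤ maxWindowDensity S n :=
  le_ciSup ⟨1, forall_mem_range.2 (window_density_le_one S n)⟩ a

lemma maxWindowDensity_le_one : maxWindowDensity S n ≤ 1 :=
  ciSup_le (window_density_le_one S n)

lemma maxWindowDensity_nonneg : 0 ≤ maxWindowDensity S n :=
  Real.iSup_nonneg fun _ => by positivity

end Window

section Density

variable (S : Set ℕ)

lemma banachDensity_le_one : banachDensity S ≤ 1 :=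
  limsup_le_of_le (isCoboundedUnder_le_of_le _ (maxWindowDensity_nonneg S))
    (Eventually.of_forall (maxWindowDensity_le_one S))

lemma frequently_lt_maxWindowDensity {c : ℝ} (h : c < banachDensity S) :
    ∃ᶠ n in atTop, c < maxWindowDensity S n :=
  frequently_lt_of_lt_limsup (isCoboundedUnder_le_of_le _ (maxWindowDensity_nonneg S)) h

lemma le_banachDensity_of_frequently {c : ℝ} (h : ∃ᶠ n in atTop, c ≤ maxWindowDensity S n) :
    c ≤ banachDensity S :=
  le_limsup_of_frequently_le h (isBoundedUnder_of ⟨1, maxWindowDensity_le_one S⟩)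

end Density

-- Distinct points of `s` have distinct quotients `(x - a) / N`, all at most `n / N`.
lemma Finset.card_le_div_add_one_of_separated {s : Finset ℕ} {a n N : ℕ} (hN : 0 < N)
    (hs : s ⊆ Finset.Ico a (a + n)) (hsep : ∀ x ∈ s, ∀ y ∈ s, x < y → x + N ≤ y) :
    s.card ≤ n / N + 1 := by
  calc s.card ≤ (Finset.range (n / N + 1)).card := by
        refine Finset.card_le_card_of_injOn (fun x => (x - a) / N) (fun x hx => ?_) ?_
        · have := Finset.mem_Ico.1 (hs hx)
          simpa [Nat.lt_succ_iff] using Nat.div_le_div_right (c := N) (by omega : x - a ≤ n)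
        · intro x hx y hy hxy
          by_contra hne
          wlog hlt : x < y generalizing x y
          · exact this hy hx hxy.symm (Ne.symm hne) (by omega)
          have hxa := (Finset.mem_Ico.1 (hs hx)).1
          have hle : (x - a) / N + 1 ≤ (y - a) / N := by
            rw [← Nat.add_div_right _ hN]
            exact Nat.div_le_div_right (by have := hsep x hx y hy hlt; omega)
          simp only at hxy
          omega
    _ = n / N + 1 := Finset.card_range _

lemma Finset.card_le_card_filter_exists_add_mem {A : Finset ℕ} {a n N : ℕ} (hN : 0 < N)
    (hA : A ⊆ Finset.Ico a (a + n)) :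
    A.card ≤ (A.filter fun x => ∃ k ∈ Finset.Icc 1 (N - 1), x + k ∈ A).card + n / N + 1 := by
  set p : ℕ → Prop := fun x => ∃ k ∈ Finset.Icc 1 (N - 1), x + k ∈ A
  have hsep : ∀ x ∈ A.filter (¬ p ·), ∀ y ∈ A.filter (¬ p ·), x < y → x + N ≤ y := by
    intro x hx y hy hxy
    by_contra! hyx
    refine (Finset.mem_filter.1 hx).2 ⟨y - x, Finset.mem_Icc.2 ⟨by omega, by omega⟩, ?_⟩
    rw [Nat.add_sub_cancel' hxy.le]
    exact (Finset.mem_filter.1 hy).1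
  have := Finset.card_le_div_add_one_of_separated hN ((Finset.filter_subset _ _).trans hA) hsep
  have := Finset.card_filter_add_card_filter_not (s := A) p
  simp only [p] at *
  omega

lemma Finset.exists_card_filter_exists_add_mem_le {N : ℕ} (hN : 2 ≤ N) (A : Finset ℕ) :
    ∃ k ∈ Finset.Icc 1 (N - 1),
      (A.filter fun x => ∃ k ∈ Finset.Icc 1 (N - 1), x + k ∈ A).card
        ≤ (N - 1) * (A.filter (· + k ∈ A)).card := by
  refine Finset.exists_le_of_sum_le ⟨1, Finset.mem_Icc.2 ⟨le_rfl, by omega⟩⟩ ?_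
  rw [Finset.sum_const, Nat.card_Icc, smul_eq_mul, ← Finset.mul_sum, Nat.add_sub_cancel]
  gcongr
  calc _ ≤ ((Finset.Icc 1 (N - 1)).biUnion fun k => A.filter (· + k ∈ A)).card := by
        refine Finset.card_le_card fun x hx => ?_
        obtain ⟨hxA, k, hk, hxk⟩ := Finset.mem_filter.1 hx
        exact Finset.mem_biUnion.2 ⟨k, hk, Finset.mem_filter.2 ⟨hxA, hxk⟩⟩
    _ ≤ _ := Finset.card_biUnion_le

lemma exists_shift_ncard_inter_Ico_le (S : Set ℕ) {N : ℕ} (hN : 2 ≤ N) (a n : ℕ) :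
    ∃ k ∈ Finset.Icc 1 (N - 1), (S ∩ Ico a (a + n)).ncard
      ≤ (N - 1) * ({x | x ∈ S ∧ x + k ∈ S} ∩ Ico a (a + n)).ncard + n / N + 1 := by
  classical
  set A := (Finset.Ico a (a + n)).filter (· ∈ S)
  have hA : (S ∩ Ico a (a + n)).ncard = A.card := by
    rw [← ncard_coe_finset]
    congr 1
    ext x
    simp [A, and_comm]
  obtain ⟨k, hk, hUk⟩ := Finset.exists_card_filter_exists_add_mem_le hN A
  refine ⟨k, hk, ?_⟩
  have hshift : (A.filter (· + k ∈ A)).card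
      ≤ ({x | x ∈ S ∧ x + k ∈ S} ∩ Ico a (a + n)).ncard := by
    rw [← ncard_coe_finset]
    refine ncard_le_ncard (fun x hx => ?_) ((finite_Ico _ _).inter_of_right _)
    simp only [Finset.coe_filter, A, Finset.mem_filter, Finset.mem_Ico, mem_ofPred_eq] at hx
    exact ⟨⟨hx.1.2, hx.2.2⟩, hx.1.1⟩
  have hshort := Finset.card_le_card_filter_exists_add_mem (A := A) (by omega : 0 < N)
    (Finset.filter_subset _ _)
  rw [hA]
  have := Nat.mul_le_mul_left (N - 1) hshift
  omega

lemma frequently_exists_shift_le_maxWindowDensity (S : Set ℕ) {N : ℕ} (hN : 2 ≤ N)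
    (hS : 1 / N < banachDensity S) :
    ∃ᶠ n in atTop, ∃ k ∈ Finset.Icc 1 (N - 1),
      (banachDensity S - 1 / N) / (2 * (N - 1)) ≤ maxWindowDensity {x | x ∈ S ∧ x + k ∈ S} n := by
  set θ := banachDensity S - 1 / N
  have hθ : 0 < θ := sub_pos.2 hS
  have hN1 : (1 : ℝ) < N := by exact_mod_cast hN
  have hwindows := frequently_lt_maxWindowDensity S (sub_lt_self _ (by positivity : 0 < θ / 4))
  refine (hwindows.and_eventually (eventually_ge_atTop ⌈4 / θ⌉₊)).mono ?_
  rintro n ⟨hwin, hn⟩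
  obtain ⟨a, ha⟩ := exists_lt_of_lt_ciSup hwin
  obtain ⟨k, hk, hcard⟩ := exists_shift_ncard_inter_Ico_le S hN a n
  refine ⟨k, hk, le_trans ?_ (le_maxWindowDensity _ n a)⟩
  set s : ℝ := ((S ∩ Ico a (a + n)).ncard : ℝ)
  set q : ℝ := (({x | x ∈ S ∧ x + k ∈ S} ∩ Ico a (a + n)).ncard : ℝ)
  have hθn : 4 ≤ θ * n := by
    have := (div_le_iff₀' hθ).1 ((Nat.le_ceil _).trans (Nat.cast_le.2 hn))
    linarith
  have hn0 : (0 : ℝ) < n := pos_of_mul_pos_right (by linarith) hθ.le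
  have hs : (banachDensity S - θ / 4) * n < s := (lt_div_iff₀ hn0).1 ha
  have hsq : s ≤ (N - 1) * q + n / N + 1 := by
    have hcast : s ≤ ((N - 1) * ({x | x ∈ S ∧ x + k ∈ S} ∩ Ico a (a + n)).ncard
        + n / N + 1 : ℕ) := Nat.cast_le.2 hcard
    push_cast [Nat.cast_sub (by omega : 1 ≤ N)] at hcast
    linarith [Nat.cast_div_le (m := n) (n := N) (α := ℝ)]
  -- The window loses `θ n / 4` against `δ(S) n`, and the `+ 1` another `θ n / 4` at most.
  have key : θ * n ≤ 2 * (N - 1) * q := by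
    have : banachDensity S * n = θ * n + n / N := by simp only [θ]; field_simp; ring
    linarith
  rw [div_le_div_iff₀ (by linarith) hn0]
  linarith

theorem stmt_0_general (S : Set ℕ)
    (hδ : 0 < banachDensity S) (N : ℕ) (hN : N = ⌊1 / banachDensity S⌋₊ + 1) :
    ∃ (k : ℕ) (Q : Set ℕ), 0 < k ∧ k ≤ N - 1 ∧ Q ⊆ S ∧
      banachDensity Q ≥ ((N : ℝ) * banachDensity S - 1) / (2 * (N : ℝ) ^ 2 * ((N : ℝ) - 1)) ∧
      ((N : ℝ) * banachDensity S - 1) / (2 * (N : ℝ) ^ 2 * ((N : ℝ) - 1)) > 0 ∧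
      ∀ a ∈ Q, a + k ∈ S := by
  set δ := banachDensity S
  have hN2 : 2 ≤ N := by
    have : 1 ≤ ⌊1 / δ⌋₊ := Nat.le_floor (by simpa using one_le_one_div hδ (banachDensity_le_one S))
    omega
  have hN1 : (1 : ℝ) < N := by exact_mod_cast hN2
  have hδN : 1 / N < δ := by
    have : 1 / δ < N := by rw [hN]; push_cast; exact Nat.lt_floor_add_one _
    exact (div_lt_iff₀ (by linarith)).2 (by rwa [div_lt_iff₀ hδ, mul_comm] at this)
  obtain ⟨k, hk, hfreq⟩ := (Finset.frequently_exists _).1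
    (frequently_exists_shift_le_maxWindowDensity S hN2 hδN)
  obtain ⟨hk1, hkN⟩ := Finset.mem_Icc.1 hk
  have hc : ((N : ℝ) * δ - 1) / (2 * (N : ℝ) ^ 2 * ((N : ℝ) - 1))
      = (δ - 1 / N) / (2 * (N - 1)) / N := by
    field_simp
  have hθ : 0 < (δ - 1 / N) / (2 * (N - 1)) := div_pos (by linarith) (by linarith)
  refine ⟨k, {x | x ∈ S ∧ x + k ∈ S}, hk1, hkN, fun x hx => hx.1, ?_, ?_, fun x hx => hx.2⟩
  · rw [hc, ge_iff_le]
    exact (div_le_self hθ.le hN1.le).trans (le_banachDensity_of_frequently _ hfreq)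
  · rw [hc]
    positivity

theorem stmt_0 (S : Set ℕ) (hpos : ∀ n ∈ S, 0 < n)
    (hδ : 0 < banachDensity S) (N : ℕ) (hN : N = ⌊1 / banachDensity S⌋₊ + 1) :
    ∃ (k : ℕ) (Q : Set ℕ), 0 < k ∧ k ≤ N - 1 ∧ Q ⊆ S ∧
      banachDensity Q ≥ ((N : ℝ) * banachDensity S - 1) / (2 * (N : ℝ) ^ 2 * ((N : ℝ) - 1)) ∧
      ((N : ℝ) * banachDensity S - 1) / (2 * (N : ℝ) ^ 2 * ((N : ℝ) - 1)) > 0 ∧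
      ∀ a ∈ Q, a + k ∈ S :=
  stmt_0_general S hδ N hN
end

section
/- Let S be a set of positive integers with positive Banach density δ(S) > 0, let N = ⌊1/δ(S)⌋ + 1, and let P = { i ∈ ℕ : |{iN+1, iN+2, …, (i+1)N} ∩ S| ≥ 2 }. Then the Banach density of P satisfies δ(P) ≥ (δ(S) − 1/N)/2. -/
open Filter Topology

-- `banachDensity T` is definitionally `limsup (windowDensity T) atTop`.
noncomputable def windowDensity (T : Set ℕ) (n : ℕ) : ℝ :=
  ⨆ a : ℕ, ((T ∩ Set.Ico a (a + n)).ncard : ℝ) / n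

def block (N i : ℕ) : Set ℕ := Set.Icc (i * N + 1) ((i + 1) * N)

section WindowDensity

variable (T : Set ℕ)

theorem ncard_inter_Ico_add_le (a n : ℕ) : (T ∩ Set.Ico a (a + n)).ncard ≤ n := by
  calc (T ∩ Set.Ico a (a + n)).ncard ≤ (Set.Ico a (a + n)).ncard :=
        Set.ncard_le_ncard Set.inter_subset_right (Set.finite_Ico _ _)
    _ = n := by
      rw [Set.ncard_eq_toFinset_card', Set.toFinset_Ico, Nat.card_Ico, Nat.add_sub_cancel_left]

theorem ncard_inter_Ico_div_le_one (a n : ℕ) :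
    ((T ∩ Set.Ico a (a + n)).ncard : ℝ) / n ≤ 1 :=
  div_le_one_of_le₀ (mod_cast ncard_inter_Ico_add_le T a n) n.cast_nonneg

theorem bddAbove_range_ncard_inter_Ico_div (n : ℕ) :
    BddAbove (Set.range fun a ↦ ((T ∩ Set.Ico a (a + n)).ncard : ℝ) / n) :=
  ⟨1, Set.forall_mem_range.2 fun a ↦ ncard_inter_Ico_div_le_one T a n⟩

theorem ncard_inter_Ico_div_le_windowDensity (a n : ℕ) :
    ((T ∩ Set.Ico a (a + n)).ncard : ℝ) / n ≤ windowDensity T n :=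
  le_ciSup (bddAbove_range_ncard_inter_Ico_div T n) a

theorem windowDensity_nonneg (n : ℕ) : 0 ≤ windowDensity T n :=
  (by positivity : (0 : ℝ) ≤ _).trans (ncard_inter_Ico_div_le_windowDensity T 0 n)

theorem windowDensity_le_one (n : ℕ) : windowDensity T n ≤ 1 :=
  ciSup_le fun a ↦ ncard_inter_Ico_div_le_one T a n

theorem isBoundedUnder_le_windowDensity {ι : Type*} (l : Filter ι) (φ : ι → ℕ) :
    l.IsBoundedUnder (· ≤ ·) (windowDensity T ∘ φ) :=
  isBoundedUnder_of ⟨1, fun i ↦ windowDensity_le_one T (φ i)⟩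

theorem isBoundedUnder_ge_windowDensity {ι : Type*} (l : Filter ι) (φ : ι → ℕ) :
    l.IsBoundedUnder (· ≥ ·) (windowDensity T ∘ φ) :=
  isBoundedUnder_of ⟨0, fun i ↦ windowDensity_nonneg T (φ i)⟩

theorem banachDensity_nonneg : 0 ≤ banachDensity T :=
  le_limsup_of_frequently_le (Frequently.of_forall (windowDensity_nonneg T))
    (isBoundedUnder_le_windowDensity T atTop id)

end WindowDensity

section Blocks

variable {N : ℕ}

theorem mem_block_pred_div (hN : 0 < N) {x : ℕ} (hx : 0 < x) : x ∈ block N ((x - 1) / N) := by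
  have h₁ := Nat.div_mul_le_self (x - 1) N
  have h₂ := Nat.lt_mul_div_succ (x - 1) hN
  rw [mul_add, mul_one, mul_comm] at h₂
  simp only [block, Set.mem_Icc, add_mul, one_mul]
  omega

theorem ncard_inter_block_le (S : Set ℕ) (i : ℕ) : (S ∩ block N i).ncard ≤ N := by
  calc (S ∩ block N i).ncard ≤ (block N i).ncard :=
        Set.ncard_le_ncard Set.inter_subset_right (Set.finite_Icc _ _)
    _ = N := by
      rw [block, Set.ncard_eq_toFinset_card', Set.toFinset_Icc, Nat.card_Icc]
      ring_nf
      omega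

variable {S P : Set ℕ}

theorem ncard_biUnion_block_le (hP : ∀ i ∉ P, (S ∩ block N i).ncard ≤ 1) (a m : ℕ) :
    (⋃ i ∈ Finset.Ico a (a + m), S ∩ block N i).ncard ≤
      m + N * (P ∩ Set.Ico a (a + m)).ncard := by
  classical
  have hblock (i : ℕ) : (S ∩ block N i).ncard ≤ 1 + if i ∈ P then N else 0 := by
    by_cases hi : i ∈ P
    · simpa [hi] using (ncard_inter_block_le S i).trans (Nat.le_add_left N 1)
    · simpa [hi] using hP i hi
  calc (⋃ i ∈ Finset.Ico a (a + m), S ∩ block N i).ncard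
      ≤ ∑ i ∈ Finset.Ico a (a + m), (S ∩ block N i).ncard := Finset.set_ncard_biUnion_le _ _
    _ ≤ ∑ i ∈ Finset.Ico a (a + m), (1 + if i ∈ P then N else 0) :=
        Finset.sum_le_sum fun i _ ↦ hblock i
    _ = m + N * (P ∩ Set.Ico a (a + m)).ncard := by
      rw [Finset.sum_add_distrib, Finset.sum_ite, Finset.sum_const_zero, add_zero,
        Finset.sum_const, Finset.sum_const, Nat.card_Ico,
        ← Set.ncard_coe_finset (Finset.filter _ _), Finset.coe_filter, smul_eq_mul,
        smul_eq_mul, mul_one, mul_comm, Nat.add_sub_cancel_left]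
      congr 3
      ext x
      simp [and_comm]

theorem inter_Ico_subset_biUnion_block (hS : ∀ x ∈ S, 0 < x) (hN : 0 < N) (b n : ℕ) :
    S ∩ Set.Ico b (b + n) ⊆
      ⋃ i ∈ Finset.Ico ((b - 1) / N) ((b - 1) / N + (n / N + 2)), S ∩ block N i := by
  rintro x ⟨hxS, hbx, hxn⟩
  simp only [Set.mem_iUnion, Finset.mem_Ico, exists_prop]
  refine ⟨(x - 1) / N, ⟨Nat.div_le_div_right (by omega), ?_⟩, hxS,
    mem_block_pred_div hN (hS x hxS)⟩
  have h₁ := Nat.lt_mul_div_succ (b - 1) hN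
  have h₂ := Nat.lt_mul_div_succ n hN
  rw [Nat.div_lt_iff_lt_mul hN]
  rw [mul_add, mul_one] at h₁ h₂
  rw [add_mul, add_mul, mul_comm ((b - 1) / N), mul_comm (n / N)]
  omega

theorem windowDensity_le_windowDensity_div_add (hS : ∀ x ∈ S, 0 < x) (hN : 0 < N)
    (hP : ∀ i ∉ P, (S ∩ block N i).ncard ≤ 1) {n : ℕ} (hn : 0 < n) :
    windowDensity S n ≤ windowDensity P (n / N + 2) + (1 / N + 4 * N / n) := by
  refine ciSup_le fun b ↦ ?_
  set M := n / N + 2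
  set a := (b - 1) / N
  set w := windowDensity P M
  have hcount : (S ∩ Set.Ico b (b + n)).ncard ≤ M + N * (P ∩ Set.Ico a (a + M)).ncard :=
    (Set.ncard_le_ncard (inter_Ico_subset_biUnion_block hS hN b n)
      ((Finset.finite_toSet _).biUnion fun i _ ↦ (Set.finite_Icc _ _).inter_of_right S)).trans
      (ncard_biUnion_block_le hP a M)
  have hP_count : ((P ∩ Set.Ico a (a + M)).ncard : ℝ) ≤ w * M :=
    (div_le_iff₀ (by positivity)).1 (ncard_inter_Ico_div_le_windowDensity P a M)
  have hMN : (M : ℝ) * N ≤ n + 2 * N := by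
    have := Nat.div_mul_le_self n N
    have : M * N ≤ n + 2 * N := by rw [add_mul]; omega
    exact_mod_cast this
  have hw := windowDensity_le_one P M
  have hw₀ := windowDensity_nonneg P M
  have hN' : (1 : ℝ) ≤ N := by exact_mod_cast hN
  rw [div_le_iff₀ (by positivity)]
  calc ((S ∩ Set.Ico b (b + n)).ncard : ℝ)
      ≤ M + N * (P ∩ Set.Ico a (a + M)).ncard := by exact_mod_cast hcount
    _ ≤ M + N * (w * M) := by gcongr
    _ = M * N * (1 / N + w) := by field_simp
    _ ≤ (n + 2 * N) * (1 / N + w) := by gcongr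
    _ = n / N + n * w + 2 + 2 * N * w := by field_simp; ring
    _ ≤ (w + (1 / N + 4 * N / n)) * n := by
        rw [add_mul, add_mul, div_mul_cancel₀ _ (by positivity), one_div_mul_eq_div]
        nlinarith

theorem banachDensity_le_add_inv (hS : ∀ x ∈ S, 0 < x) (hN : 0 < N)
    (hP : ∀ i ∉ P, (S ∩ block N i).ncard ≤ 1) :
    banachDensity S ≤ banachDensity P + 1 / N := by
  set φ : ℕ → ℕ := fun n ↦ n / N + 2
  set ε : ℕ → ℝ := fun n ↦ 1 / N + 4 * N / n
  have hφ : Tendsto φ atTop atTop :=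
    tendsto_atTop_mono (fun n ↦ Nat.le_add_right _ 2) (Nat.tendsto_div_const_atTop hN.ne')
  have hε : Tendsto ε atTop (𝓝 (1 / N)) := by
    simpa [ε] using (tendsto_const_nhds (x := (1 / N : ℝ))).add
      (tendsto_const_div_atTop_nhds_zero_nat (4 * N : ℝ))
  have hbound : ∀ᶠ n in atTop, windowDensity S n ≤ (windowDensity P ∘ φ + ε) n :=
    eventually_atTop.2 ⟨1, fun n hn ↦ windowDensity_le_windowDensity_div_add hS hN hP hn⟩
  calc banachDensity S ≤ limsup (windowDensity P ∘ φ + ε) atTop :=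
        limsup_le_limsup hbound (isBoundedUnder_ge_windowDensity S atTop id).isCoboundedUnder_le
          (isBoundedUnder_le_add (isBoundedUnder_le_windowDensity P atTop φ) hε.isBoundedUnder_le)
    _ ≤ limsup (windowDensity P ∘ φ) atTop + limsup ε atTop :=
        limsup_add_le (isBoundedUnder_ge_windowDensity P atTop φ)
          (isBoundedUnder_le_windowDensity P atTop φ) hε.isCoboundedUnder_le hε.isBoundedUnder_le
    _ ≤ banachDensity P + 1 / N :=
        add_le_add (hφ.limsup_comp_le_limsup
          (isBoundedUnder_ge_windowDensity P _ id).isCoboundedUnder_le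
          (isBoundedUnder_le_windowDensity P atTop id)) hε.limsup_eq.le

end Blocks

theorem stmt_1_general (S : Set ℕ) (hpos : ∀ n ∈ S, 0 < n)
    (N : ℕ) (hN : N = ⌊1 / banachDensity S⌋₊ + 1)
    (P : Set ℕ) (hP : P = {i : ℕ | 2 ≤ (S ∩ Set.Icc (i * N + 1) ((i + 1) * N)).ncard}) :
    banachDensity P ≥ (banachDensity S - 1 / (N : ℝ)) / 2 := by
  have hblocks : ∀ i ∉ P, (S ∩ block N i).ncard ≤ 1 := by
    subst hP
    exact fun i hi ↦ Nat.le_of_lt_succ (not_le.1 hi)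
  have hdensity := banachDensity_le_add_inv hpos (by omega) hblocks
  linarith [banachDensity_nonneg P]

theorem stmt_1 (S : Set ℕ) (hpos : ∀ n ∈ S, 0 < n)
    (hδ : 0 < banachDensity S) (N : ℕ) (hN : N = ⌊1 / banachDensity S⌋₊ + 1)
    (P : Set ℕ) (hP : P = {i : ℕ | 2 ≤ (S ∩ Set.Icc (i * N + 1) ((i + 1) * N)).ncard}) :
    banachDensity P ≥ (banachDensity S - 1 / (N : ℝ)) / 2 :=
  stmt_1_general S hpos N hN P hP
end

section
/- Let X be a Noetherian topological space, let Φ : X → X be a continuous map, let x ∈ X, let Y be a closed subset of X, and let S = { n ∈ ℕ : Φⁿ(x) ∈ Y }, where Φⁿ denotes the n-th iterate of Φ. If S has positive Banach density, then S contains an infinite arithmetic progression. -/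
open Filter Topology Set

noncomputable def intervalDensity (S : Set ℕ) (a n : ℕ) : ℝ :=
  (∑ i ∈ Finset.range n, S.indicator 1 (a + i)) / n

theorem ncard_inter_Ico_eq_sum_indicator (S : Set ℕ) (a n : ℕ) :
    ((S ∩ Ico a (a + n)).ncard : ℝ) = ∑ i ∈ Finset.range n, S.indicator 1 (a + i) := by
  classical
  have hS : S ∩ Ico a (a + n) = ↑({i ∈ Finset.Ico a (a + n) | i ∈ S}) := by
    ext i; simp [and_comm]
  rw [hS, ncard_coe_finset, Finset.natCast_card_filter, Finset.sum_Ico_eq_sum_range,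
    add_tsub_cancel_left]
  simp [Set.indicator_apply]

theorem banachDensity_eq_limsup_intervalDensity (S : Set ℕ) :
    banachDensity S = limsup (fun n ↦ ⨆ a, intervalDensity S a n) atTop := by
  simp only [banachDensity, intervalDensity, ncard_inter_Ico_eq_sum_indicator]

theorem intervalDensity_nonneg (S : Set ℕ) (a n : ℕ) : 0 ≤ intervalDensity S a n := by
  unfold intervalDensity
  exact div_nonneg (Finset.sum_nonneg fun i _ ↦ Set.indicator_nonneg (fun _ _ ↦ zero_le_one) _)
    n.cast_nonneg

theorem intervalDensity_le_one (S : Set ℕ) (a n : ℕ) : intervalDensity S a n ≤ 1 := by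
  unfold intervalDensity
  refine div_le_one_of_le₀ ?_ n.cast_nonneg
  calc ∑ i ∈ Finset.range n, S.indicator 1 (a + i)
      ≤ ∑ _i ∈ Finset.range n, (1 : ℝ) :=
        Finset.sum_le_sum fun i _ ↦ Set.indicator_le_self' (fun _ _ ↦ zero_le_one) _
    _ = n := by simp

theorem intervalDensity_empty (a n : ℕ) : intervalDensity ∅ a n = 0 := by
  simp [intervalDensity]

theorem intervalDensity_union_add_inter (S T : Set ℕ) (a n : ℕ) :
    intervalDensity (S ∪ T) a n + intervalDensity (S ∩ T) a n
      = intervalDensity S a n + intervalDensity T a n := by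
  simp only [intervalDensity, ← add_div, ← Finset.sum_add_distrib,
    Set.indicator_union_add_inter_apply]

theorem abs_intervalDensity_preimage_add_one_sub_le (S : Set ℕ) (a n : ℕ) :
    |intervalDensity ((· + 1) ⁻¹' S) a n - intervalDensity S a n| ≤ 1 / n := by
  classical
  set f : ℕ → ℝ := fun i ↦ S.indicator 1 (a + i)
  have hshift : ∀ i, ((· + 1) ⁻¹' S).indicator (1 : ℕ → ℝ) (a + i) = f (i + 1) := fun i ↦ by
    simp [f, Set.indicator_apply, add_assoc]
  have htelescope : ∑ i ∈ Finset.range n, f (i + 1) - ∑ i ∈ Finset.range n, f i = f n - f 0 := by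
    linarith [Finset.sum_range_succ f n, Finset.sum_range_succ' f n]
  have hf : ∀ i, 0 ≤ f i ∧ f i ≤ 1 := fun i ↦ by
    simp only [f, Set.indicator_apply]; split_ifs <;> norm_num
  simp only [intervalDensity, hshift]
  rw [← sub_div, htelescope, abs_div, Nat.abs_cast]
  gcongr
  exact abs_sub_le_of_nonneg_of_le (hf n).1 (hf n).2 (hf 0).1 (hf 0).2

theorem frequently_exists_lt_intervalDensity {S : Set ℕ} {c : ℝ} (hc : c < banachDensity S) :
    ∃ᶠ n in atTop, ∃ a, c < intervalDensity S a n := by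
  rw [banachDensity_eq_limsup_intervalDensity] at hc
  have hcobdd : IsCoboundedUnder (· ≤ ·) atTop (fun n ↦ ⨆ a, intervalDensity S a n) :=
    isCoboundedUnder_le_of_le atTop fun n ↦ Real.iSup_nonneg fun a ↦ intervalDensity_nonneg S a n
  exact (frequently_lt_of_lt_limsup hcobdd hc).mono fun n hn ↦ exists_lt_of_lt_ciSup hn

structure ShiftInvariantMean where
  toFun : Set ℕ → ℝ
  nonneg : ∀ S, 0 ≤ toFun S
  le_one : ∀ S, toFun S ≤ 1
  empty : toFun ∅ = 0
  union_add_inter : ∀ S T, toFun (S ∪ T) + toFun (S ∩ T) = toFun S + toFun T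
  preimage_add_one : ∀ S, toFun ((· + 1) ⁻¹' S) = toFun S

namespace ShiftInvariantMean

instance : CoeFun ShiftInvariantMean fun _ ↦ Set ℕ → ℝ := ⟨toFun⟩

variable (μ : ShiftInvariantMean)

theorem union_le (S T : Set ℕ) : μ (S ∪ T) ≤ μ S + μ T := by
  linarith [μ.union_add_inter S T, μ.nonneg (S ∩ T)]

theorem biUnion_range_le_sum (A : ℕ → Set ℕ) (N : ℕ) :
    μ (⋃ i ∈ Finset.range N, A i) ≤ ∑ i ∈ Finset.range N, μ (A i) := by
  induction N with
  | zero => simp [μ.empty]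
  | succ N ih =>
    rw [Finset.range_add_one, Finset.set_biUnion_insert, Finset.sum_insert Finset.notMem_range_self]
    linarith [μ.union_le (A N) (⋃ i ∈ Finset.range N, A i)]

theorem nonempty_of_pos {S : Set ℕ} (hS : 0 < μ S) : S.Nonempty := by
  rw [nonempty_iff_ne_empty]
  rintro rfl
  exact hS.ne' μ.empty

theorem exists_pos_inter_preimage_add {S : Set ℕ} (hS : 0 < μ S) :
    ∃ d, 0 < d ∧ 0 < μ (S ∩ (· + d) ⁻¹' S) := by
  by_contra! hnull
  -- The translates `(· + i) ⁻¹' S` would pairwise meet in null sets, so the union `E N` of the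
  -- first `N` of them would have mean at least `N * μ S`, which exceeds `1` for large `N`.
  set E : ℕ → Set ℕ := fun N ↦ ⋃ i ∈ Finset.range N, (· + i) ⁻¹' S
  have hE : ∀ N, E (N + 1) = S ∪ (· + 1) ⁻¹' E N := fun N ↦ by
    ext n
    simp only [E, mem_iUnion, Finset.mem_range, mem_preimage, mem_union, exists_prop]
    constructor
    · rintro ⟨_ | i, hi, h⟩
      · exact Or.inl h
      · exact Or.inr ⟨i, by omega, by rwa [add_right_comm]⟩
    · rintro (h | ⟨i, hi, h⟩)
      · exact ⟨0, N.succ_pos, h⟩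
      · exact ⟨i + 1, by omega, by rwa [add_right_comm] at h⟩
  have hreturn : ∀ N, μ (S ∩ (· + 1) ⁻¹' E N) = 0 := fun N ↦ by
    have hEq : S ∩ (· + 1) ⁻¹' E N = ⋃ i ∈ Finset.range N, S ∩ (· + (i + 1)) ⁻¹' S := by
      ext n; simp [E, add_assoc, add_comm 1]
    refine le_antisymm ?_ (μ.nonneg _)
    rw [hEq]
    refine (μ.biUnion_range_le_sum _ N).trans (Finset.sum_nonpos fun i _ ↦ hnull _ i.succ_pos)
  have hgrowth : ∀ N : ℕ, N * μ S ≤ μ (E N) := fun N ↦ by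
    induction N with
    | zero => simpa using μ.nonneg (E 0)
    | succ N ih =>
      have := μ.union_add_inter S ((· + 1) ⁻¹' E N)
      rw [← hE, hreturn, μ.preimage_add_one] at this
      push_cast
      linarith
  obtain ⟨N, hN⟩ := exists_nat_gt (1 / μ S)
  rw [div_lt_iff₀ hS] at hN
  linarith [hgrowth N, μ.le_one (E N)]

section OfUltrafilter

variable (𝒰 : Ultrafilter ℕ) (A : ℕ → ℕ)

theorem exists_tendsto_intervalDensity (S : Set ℕ) :
    ∃ L, Tendsto (fun n ↦ intervalDensity S (A n) n) 𝒰 (𝓝 L) := by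
  obtain ⟨L, -, hL⟩ := isCompact_Icc.ultrafilter_le_nhds'
    (𝒰.map fun n : ℕ ↦ intervalDensity S (A n) n) (Ultrafilter.mem_map.2 <| univ_mem' fun n ↦
      ⟨intervalDensity_nonneg S (A n) n, intervalDensity_le_one S (A n) n⟩)
  exact ⟨L, hL⟩

theorem tendsto_limUnder_intervalDensity (S : Set ℕ) :
    Tendsto (fun n ↦ intervalDensity S (A n) n) 𝒰
      (𝓝 (limUnder (𝒰 : Filter ℕ) fun n ↦ intervalDensity S (A n) n)) :=
  tendsto_nhds_limUnder (exists_tendsto_intervalDensity 𝒰 A S)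

noncomputable def ofUltrafilter (h𝒰 : (𝒰 : Filter ℕ) ≤ atTop) : ShiftInvariantMean where
  toFun S := limUnder (𝒰 : Filter ℕ) fun n ↦ intervalDensity S (A n) n
  nonneg S := ge_of_tendsto' (tendsto_limUnder_intervalDensity 𝒰 A S) fun n ↦
    intervalDensity_nonneg S (A n) n
  le_one S := le_of_tendsto' (tendsto_limUnder_intervalDensity 𝒰 A S) fun n ↦
    intervalDensity_le_one S (A n) n
  empty := tendsto_nhds_unique (tendsto_limUnder_intervalDensity 𝒰 A ∅) <| by
    simp only [intervalDensity_empty, tendsto_const_nhds]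
  union_add_inter S T := by
    refine tendsto_nhds_unique ?_ ((tendsto_limUnder_intervalDensity 𝒰 A S).add
      (tendsto_limUnder_intervalDensity 𝒰 A T))
    simpa only [intervalDensity_union_add_inter] using
      (tendsto_limUnder_intervalDensity 𝒰 A (S ∪ T)).add
        (tendsto_limUnder_intervalDensity 𝒰 A (S ∩ T))
  preimage_add_one S := by
    have hdiff : Tendsto (fun n ↦ intervalDensity ((· + 1) ⁻¹' S) (A n) n
        - intervalDensity S (A n) n) 𝒰 (𝓝 0) :=
      squeeze_zero_norm (fun n ↦ abs_intervalDensity_preimage_add_one_sub_le S (A n) n)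
        (tendsto_one_div_atTop_nhds_zero_nat.mono_left h𝒰)
    refine tendsto_nhds_unique (tendsto_limUnder_intervalDensity 𝒰 A _) ?_
    simpa using hdiff.add (tendsto_limUnder_intervalDensity 𝒰 A S)

end OfUltrafilter

theorem exists_pos_of_banachDensity_pos {S : Set ℕ} (hS : 0 < banachDensity S) :
    ∃ μ : ShiftInvariantMean, 0 < μ S := by
  have := frequently_iff_neBot.1 (frequently_exists_lt_intervalDensity (half_lt_self hS))
  obtain ⟨𝒰, h𝒰⟩ := exists_ultrafilter_le
    (atTop ⊓ 𝓟 {n | ∃ a, banachDensity S / 2 < intervalDensity S a n})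
  choose! A hA using fun n (h : ∃ a, banachDensity S / 2 < intervalDensity S a n) ↦ h
  refine ⟨ofUltrafilter 𝒰 A (h𝒰.trans inf_le_left), (half_pos hS).trans_le ?_⟩
  refine ge_of_tendsto (tendsto_limUnder_intervalDensity 𝒰 A S) ?_
  filter_upwards [le_principal_iff.mp (h𝒰.trans inf_le_right)] with n hn using (hA n hn).le

end ShiftInvariantMean

theorem TopologicalSpace.NoetherianSpace.exists_subset_mapsTo_iterate {X : Type*}
    [TopologicalSpace X] [NoetherianSpace X] {Φ : X → X} (hΦ : Continuous Φ) {P : Set X → Prop}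
    (hP : ∀ Z, IsClosed Z → P Z → ∃ d, 0 < d ∧ P (Z ∩ Φ^[d] ⁻¹' Z))
    {Y : Set X} (hY : IsClosed Y) (hPY : P Y) :
    ∃ Z ⊆ Y, P Z ∧ ∃ d, 0 < d ∧ MapsTo Φ^[d] Z Z := by
  obtain ⟨C, hC⟩ := exists_minimal_of_wellFoundedLT
    (fun C : Closeds X ↦ (C : Set X) ⊆ Y ∧ P C) ⟨⟨Y, hY⟩, subset_rfl, hPY⟩
  obtain ⟨d, hd, hPD⟩ := hP C C.isClosed hC.1.2
  let D : Closeds X := ⟨C ∩ Φ^[d] ⁻¹' C, C.isClosed.inter (C.isClosed.preimage (hΦ.iterate d))⟩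
  have hCD : C ≤ D := hC.le_of_le ⟨inter_subset_left.trans hC.1.1, hPD⟩ inter_subset_left
  exact ⟨C, hC.1.1, hC.1.2, d, hd, fun z hz ↦ (hCD hz).2⟩

theorem stmt_6 {X : Type*} [TopologicalSpace X] [TopologicalSpace.NoetherianSpace X]
    (Φ : X → X) (hΦ : Continuous Φ) (x : X) (Y : Set X) (hY : IsClosed Y)
    (hδ : 0 < banachDensity {n : ℕ | Φ^[n] x ∈ Y}) :
    ∃ a d : ℕ, 0 < d ∧
      {m : ℕ | ∃ n : ℕ, m = a + n * d} ⊆ {n : ℕ | Φ^[n] x ∈ Y} := by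
  obtain ⟨μ, hμY⟩ := ShiftInvariantMean.exists_pos_of_banachDensity_pos hδ
  have hvisits (Z : Set X) (d : ℕ) : {n | Φ^[n] x ∈ Z ∩ Φ^[d] ⁻¹' Z}
      = {n | Φ^[n] x ∈ Z} ∩ (· + d) ⁻¹' {n | Φ^[n] x ∈ Z} := by
    ext n; simp [← Function.iterate_add_apply, add_comm d]
  obtain ⟨Z, hZY, hZ, d, hd, hmaps⟩ :=
    TopologicalSpace.NoetherianSpace.exists_subset_mapsTo_iterate hΦ
      (P := fun Z ↦ 0 < μ {n | Φ^[n] x ∈ Z})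
      (fun Z _ hZ ↦ by simpa only [hvisits] using μ.exists_pos_inter_preimage_add hZ) hY hμY
  obtain ⟨a, ha⟩ := μ.nonempty_of_pos hZ
  refine ⟨a, d, hd, ?_⟩
  rintro _ ⟨n, rfl⟩
  have h := hmaps.iterate n ha
  rw [← Function.iterate_mul, ← Function.iterate_add_apply, mul_comm, add_comm] at h
  exact hZY h
end

section
/- Let X be a Noetherian topological space, let Φ : X → X be a continuous map, let x ∈ X, and let a ≥ 1 and b ≥ 0 be natural numbers. For i ≥ 0 let Cᵢ denote the topological closure of the set Sᵢ = { Φ^(an+b)(x) : n ≥ i }. Then the chain C₀ ⊇ C₁ ⊇ C₂ ⊇ ⋯ stabilizes: there exists m such that Cₘ = Cₘ₊₁ = ⋯; and the stabilized set V₀ = Cₘ satisfies Φ⁻ᵃ(V₀) ⊇ V₀, i.e., Φᵃ maps V₀ into V₀. -/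
/-!
The sets `Cᵢ` are the closures of the tails of the sequence `uₙ = Φ^(an+b)(x)`, so they
decrease, and a decreasing chain of closed sets in a Noetherian space is eventually constant.
Since `Φᵃ(uₙ) = uₙ₊₁`, continuity of `Φᵃ` maps `Cᵢ` into `Cᵢ₊₁`, which for `i` past the
stabilization index is `Cᵢ` itself.
-/

open Set TopologicalSpace

theorem TopologicalSpace.NoetherianSpace.exists_eq_of_antitone {X : Type*} [TopologicalSpace X]
    [NoetherianSpace X] {C : ℕ → Set X} (hC : Antitone C) (hclosed : ∀ i, IsClosed (C i)) :
    ∃ m, ∀ i, m ≤ i → C i = C m := by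
  obtain ⟨m, hm⟩ := WellFoundedLT.antitone_chain_condition
    (f := fun i => (⟨C i, hclosed i⟩ : Closeds X)) fun _ _ hij => hC hij
  exact ⟨m, fun i hi => congrArg SetLike.coe (hm i hi).symm⟩

section TailClosure

variable {X : Type*} [TopologicalSpace X]

theorem antitone_closure_image_Ici (u : ℕ → X) : Antitone fun i => closure (u '' Ici i) :=
  fun _ _ hij => closure_mono <| image_mono <| Ici_subset_Ici.2 hij

theorem mapsTo_closure_image_Ici {g : X → X} (hg : Continuous g) {u : ℕ → X}
    (hgu : ∀ n, g (u n) = u (n + 1)) (i : ℕ) :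
    MapsTo g (closure (u '' Ici i)) (closure (u '' Ici (i + 1))) := by
  refine MapsTo.closure ?_ hg
  rintro _ ⟨n, hn, rfl⟩
  exact ⟨n + 1, Nat.succ_le_succ hn, (hgu n).symm⟩

end TailClosure

theorem stmt_13_general {X : Type*} [TopologicalSpace X] [TopologicalSpace.NoetherianSpace X]
    (Φ : X → X) (hΦ : Continuous Φ) (x : X) (a b : ℕ)
    (C : ℕ → Set X)
    (hC : ∀ i : ℕ, C i = closure {y : X | ∃ n : ℕ, i ≤ n ∧ y = Φ^[a * n + b] x}) :
    (∀ i : ℕ, C (i + 1) ⊆ C i) ∧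
      ∃ m : ℕ, (∀ i : ℕ, m ≤ i → C i = C m) ∧ C m ⊆ Φ^[a] ⁻¹' (C m) := by
  set u : ℕ → X := fun n => Φ^[a * n + b] x
  have hCu : C = fun i => closure (u '' Ici i) := by
    ext1 i
    simp only [hC i, image, mem_Ici, eq_comm (a := u _)]
    rfl
  have hanti : Antitone C := hCu ▸ antitone_closure_image_Ici u
  have hstep : ∀ n, Φ^[a] (u n) = u (n + 1) := fun n => by
    simp only [u, ← Function.iterate_add_apply]
    ring_nf
  obtain ⟨m, hm⟩ := NoetherianSpace.exists_eq_of_antitone hanti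
    fun i => hCu ▸ isClosed_closure
  refine ⟨fun i => hanti i.le_succ, m, hm, ?_⟩
  have hmaps : MapsTo Φ^[a] (C m) (C (m + 1)) :=
    hCu ▸ mapsTo_closure_image_Ici (hΦ.iterate a) hstep m
  rw [hm (m + 1) m.le_succ] at hmaps
  exact hmaps.subset_preimage

theorem stmt_13 {X : Type*} [TopologicalSpace X] [TopologicalSpace.NoetherianSpace X]
    (Φ : X → X) (hΦ : Continuous Φ) (x : X) (a b : ℕ) (ha : 1 ≤ a)
    (C : ℕ → Set X)
    (hC : ∀ i : ℕ, C i = closure {y : X | ∃ n : ℕ, i ≤ n ∧ y = Φ^[a * n + b] x}) :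
    (∀ i : ℕ, C (i + 1) ⊆ C i) ∧
      ∃ m : ℕ, (∀ i : ℕ, m ≤ i → C i = C m) ∧ C m ⊆ Φ^[a] ⁻¹' (C m) :=
  stmt_13_general Φ hΦ x a b C hC
end
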